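/- arXiv:1608.00904 — 3 statements merged into one kernel-verified Lean document; each statement's English description precedes it below -/
import Mathlib

section
/- Let K'_{n,n} be the graph obtained from the complete bipartite graph K_{n,n} by subdividing exactly one edge (so V = {u_1,...,u_n, v_1,...,v_n, w}, with all edges u_i v_j except u_n v_n, plus edges u_n w and w v_n). Then the edge-coloring α defined by α(u_i v_j) = i + j − 1, α(u_n w) = 2n − 1, α(w v_n) = 2n is a proper (2n)-edge-coloring of K'_{n,n} with deficiency def(K'_{n,n}, α) = 1. -/
open scoped Classical

/-- A proper edge-coloring: distinct edges sharing a vertex receive distinct colors. -/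
def IsProperEdgeColoring {V : Type*} (G : SimpleGraph V) (c : Sym2 V → ℕ) : Prop :=
  ∀ e ∈ G.edgeSet, ∀ e' ∈ G.edgeSet, e ≠ e' → (∃ v, v ∈ e ∧ v ∈ e') → c e ≠ c e'

/-- A proper `t`-edge-coloring: proper, colors lie in `{1,…,t}`, and all colors are used. -/
def IsProperTEdgeColoring {V : Type*} (G : SimpleGraph V) (t : ℕ) (c : Sym2 V → ℕ) : Prop :=
  IsProperEdgeColoring G c ∧ (∀ e ∈ G.edgeSet, c e ∈ Finset.Icc 1 t) ∧
    ∀ k ∈ Finset.Icc 1 t, ∃ e ∈ G.edgeSet, c e = k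

/-- The vSpectrum of a vertex: the set of colors appearing on edges incident to `v`. -/
noncomputable def vSpectrum {V : Type*} [Fintype V] (G : SimpleGraph V) (c : Sym2 V → ℕ)
    (v : V) : Finset ℕ :=
  (Finset.univ.filter (fun u => G.Adj v u)).image (fun u => c s(v, u))

/-- The deficiency of a finite set of naturals: `max S − min S − |S| + 1`. -/
def setDef (S : Finset ℕ) : ℕ := (S.max.getD 0 - S.min.getD 0) - (S.card - 1)

/-- The deficiency of a proper edge-coloring: the sum of vertex deficiencies. -/
noncomputable def colDef {V : Type*} [Fintype V] (G : SimpleGraph V) (c : Sym2 V → ℕ) : ℕ :=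
  ∑ v, setDef (vSpectrum G c v)

/-- The deficiency of a graph: the minimum deficiency over all proper edge-colorings. -/
noncomputable def graphDef {V : Type*} [Fintype V] (G : SimpleGraph V) : ℕ :=
  sInf {d | ∃ c, IsProperEdgeColoring G c ∧ colDef G c = d}

/-- `w_def G`: the least `t` such that some proper `t`-edge-coloring attains `def(G)`. -/
noncomputable def wdef {V : Type*} [Fintype V] (G : SimpleGraph V) : ℕ :=
  sInf {t | ∃ c, IsProperTEdgeColoring G t c ∧ colDef G c = graphDef G}

/-- `W_def G`: the greatest `t` such that some proper `t`-edge-coloring attains `def(G)`. -/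
noncomputable def Wdef {V : Type*} [Fintype V] (G : SimpleGraph V) : ℕ :=
  sSup {t | ∃ c, IsProperTEdgeColoring G t c ∧ colDef G c = graphDef G}

/-- A graph is interval colorable if some proper edge-coloring has deficiency `0`. -/
def IntervalColorable {V : Type*} [Fintype V] (G : SimpleGraph V) : Prop :=
  ∃ c, IsProperEdgeColoring G c ∧ colDef G c = 0

/-- `w G`: the least `t` such that `G` has an interval `t`-coloring. -/
noncomputable def wint {V : Type*} [Fintype V] (G : SimpleGraph V) : ℕ :=
  sInf {t | ∃ c, IsProperTEdgeColoring G t c ∧ colDef G c = 0}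

/-- `W G`: the greatest `t` such that `G` has an interval `t`-coloring. -/
noncomputable def Wint {V : Type*} [Fintype V] (G : SimpleGraph V) : ℕ :=
  sSup {t | ∃ c, IsProperTEdgeColoring G t c ∧ colDef G c = 0}

/-- `K'_{n,n}`: the complete bipartite graph `K_{n,n}` with the edge `u_n v_n`
subdivided by a new vertex `w`.  Here `Sum.inl i` is `u_{i+1}`,
`Sum.inr (Sum.inl j)` is `v_{j+1}` and `Sum.inr (Sum.inr ())` is `w`. -/
def Kprime (n : ℕ) : SimpleGraph (Fin n ⊕ Fin n ⊕ Unit) :=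
  SimpleGraph.fromRel (fun a b =>
    (∃ i j : Fin n, a = Sum.inl i ∧ b = Sum.inr (Sum.inl j) ∧
      ¬(i.val = n - 1 ∧ j.val = n - 1)) ∨
    (∃ i : Fin n, i.val = n - 1 ∧ a = Sum.inl i ∧ b = Sum.inr (Sum.inr ())) ∨
    (∃ j : Fin n, j.val = n - 1 ∧ a = Sum.inr (Sum.inr ()) ∧ b = Sum.inr (Sum.inl j)))

/-- The coloring `α(u_i v_j) = i + j − 1`, `α(u_n w) = 2n − 1`, `α(w v_n) = 2n`
(with the `1`-based indexing of the paper). -/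
def KprimeColoring (n : ℕ) : Sym2 (Fin n ⊕ Fin n ⊕ Unit) → ℕ :=
  Sym2.lift ⟨fun a b =>
    match a, b with
    | Sum.inl i, Sum.inr (Sum.inl j) => i.val + j.val + 1
    | Sum.inr (Sum.inl j), Sum.inl i => i.val + j.val + 1
    | Sum.inl _, Sum.inr (Sum.inr _) => 2 * n - 1
    | Sum.inr (Sum.inr _), Sum.inl _ => 2 * n - 1
    | Sum.inr (Sum.inl _), Sum.inr (Sum.inr _) => 2 * n
    | Sum.inr (Sum.inr _), Sum.inr (Sum.inl _) => 2 * n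
    | _, _ => 0,
    by intro a b; rcases a with i | j | u <;> rcases b with ip | jp | up <;> rfl⟩

/-! The spectra of `α` are explicit intervals except at one vertex: `u_i` sees `[i, i + n - 1]`,
`v_j` for `j < n` sees `[j, j + n - 1]` and `w` sees `{2n - 1, 2n}`, while `v_n` sees `[n, 2n]`
with `2n - 1` missing, because the colour `2n - 1` of the removed edge `u_n v_n` is now carried
by `u_n w`. The deficiency of a spectrum is the number of colours missing from the interval it
spans, so the total deficiency is `1`. -/

open Finset

theorem setDef_eq_card_sdiff {S : Finset ℕ} {a b : ℕ} (ha : a ∈ S) (hb : b ∈ S)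
    (hS : S ⊆ Icc a b) : setDef S = #(Icc a b \ S) := by
  have hmax : S.max = b :=
    le_antisymm (Finset.max_le fun x hx => WithBot.coe_le_coe.2 (mem_Icc.1 (hS hx)).2)
      (le_max hb)
  have hmin : S.min = a :=
    le_antisymm (min_le ha) (Finset.le_min fun x hx => WithTop.coe_le_coe.2 (mem_Icc.1 (hS hx)).1)
  have hpos : 0 < #S := card_pos.2 ⟨a, ha⟩
  have hab : #S ≤ b + 1 - a := by simpa using card_le_card hS
  rw [setDef, hmax, hmin, card_sdiff_of_subset hS, Nat.card_Icc]
  change b - a - (#S - 1) = b + 1 - a - #S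
  omega

theorem setDef_Icc {a b : ℕ} (h : a ≤ b) : setDef (Icc a b) = 0 := by
  rw [setDef_eq_card_sdiff (left_mem_Icc.2 h) (right_mem_Icc.2 h) subset_rfl]
  simp

theorem setDef_Icc_erase {a b k : ℕ} (hak : a < k) (hkb : k < b) :
    setDef ((Icc a b).erase k) = 1 := by
  rw [setDef_eq_card_sdiff (mem_erase.2 ⟨hak.ne, left_mem_Icc.2 (hak.trans hkb).le⟩)
    (mem_erase.2 ⟨hkb.ne', right_mem_Icc.2 (hak.trans hkb).le⟩) (erase_subset _ _),
    sdiff_erase_self (mem_Icc.2 ⟨hak.le, hkb.le⟩), card_singleton]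

section EdgeColoring

variable {V : Type*} {G : SimpleGraph V} {c : Sym2 V → ℕ}

theorem IsProperEdgeColoring.of_injOn
    (h : ∀ v, Set.InjOn (fun u => c s(v, u)) (G.neighborSet v)) : IsProperEdgeColoring G c := by
  rintro e he e' he' hne ⟨v, hve, hve'⟩
  obtain ⟨a, rfl⟩ := Sym2.mem_iff_exists.1 hve
  obtain ⟨b, rfl⟩ := Sym2.mem_iff_exists.1 hve'
  exact fun hc => hne (congrArg _ (h v he he' hc))

variable [Fintype V]

theorem mem_vSpectrum {v : V} {k : ℕ} :
    k ∈ vSpectrum G c v ↔ ∃ u, G.Adj v u ∧ c s(v, u) = k := by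
  simp [vSpectrum]

theorem isProperTEdgeColoring_of_vSpectrum {t : ℕ} (hc : IsProperEdgeColoring G c)
    (hsub : ∀ v, vSpectrum G c v ⊆ Icc 1 t)
    (hcover : ∀ k ∈ Icc 1 t, ∃ v, k ∈ vSpectrum G c v) :
    IsProperTEdgeColoring G t c := by
  refine ⟨hc, ?_, fun k hk => ?_⟩
  · intro e he
    induction e using Sym2.ind with
    | _ v u => exact hsub v (mem_vSpectrum.2 ⟨u, he, rfl⟩)
  · obtain ⟨v, hv⟩ := hcover k hk
    obtain ⟨u, huv, rfl⟩ := mem_vSpectrum.1 hv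
    exact ⟨s(v, u), huv, rfl⟩

end EdgeColoring

namespace Kprime

open Sum

variable {n : ℕ}

theorem vSpectrum_inl (i : Fin n) :
    vSpectrum (Kprime n) (KprimeColoring n) (inl i) = Icc ((i : ℕ) + 1) (i + n) := by
  ext k
  simp only [mem_vSpectrum, mem_Icc]
  constructor
  · rintro ⟨_ | j | _, hadj, rfl⟩ <;> simp [Kprime, KprimeColoring] at hadj ⊢; omega
  · rintro ⟨hk1, hk2⟩
    have := i.isLt
    by_cases hw : (i : ℕ) = n - 1 ∧ k = i + n
    · exact ⟨inr (inr ()), by simp [Kprime, KprimeColoring]; omega⟩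
    · exact ⟨inr (inl ⟨k - i - 1, by omega⟩), by simp [Kprime, KprimeColoring]; omega⟩

theorem vSpectrum_inr_inl_of_lt (j : Fin n) (hj : (j : ℕ) < n - 1) :
    vSpectrum (Kprime n) (KprimeColoring n) (inr (inl j)) = Icc ((j : ℕ) + 1) (j + n) := by
  ext k
  simp only [mem_vSpectrum, mem_Icc]
  constructor
  · rintro ⟨i | _ | _, hadj, rfl⟩ <;> simp [Kprime, KprimeColoring] at hadj ⊢ <;> omega
  · rintro ⟨hk1, hk2⟩
    exact ⟨inl ⟨k - j - 1, by omega⟩, by simp [Kprime, KprimeColoring]; omega⟩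

theorem vSpectrum_inr_inl_of_eq (j : Fin n) (hj : (j : ℕ) = n - 1) :
    vSpectrum (Kprime n) (KprimeColoring n) (inr (inl j)) = (Icc n (2 * n)).erase (2 * n - 1) := by
  ext k
  simp only [mem_vSpectrum, mem_erase, mem_Icc]
  constructor
  · rintro ⟨i | _ | _, hadj, rfl⟩ <;> simp [Kprime, KprimeColoring] at hadj ⊢ <;> omega
  · rintro ⟨hk, hk1, hk2⟩
    by_cases hw : k = 2 * n
    · exact ⟨inr (inr ()), by simp [Kprime, KprimeColoring]; omega⟩
    · exact ⟨inl ⟨k - n, by omega⟩, by simp [Kprime, KprimeColoring]; omega⟩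

theorem vSpectrum_inr_inr (hn : 0 < n) (u : Unit) :
    vSpectrum (Kprime n) (KprimeColoring n) (inr (inr u)) = Icc (2 * n - 1) (2 * n) := by
  ext k
  simp only [mem_vSpectrum, mem_Icc]
  constructor
  · rintro ⟨_ | _ | _, hadj, rfl⟩ <;> simp [Kprime, KprimeColoring] at hadj ⊢
  · rintro ⟨hk1, hk2⟩
    by_cases hw : k = 2 * n
    · exact ⟨inr (inl ⟨n - 1, by omega⟩), by simp [Kprime, KprimeColoring]; omega⟩
    · exact ⟨inl ⟨n - 1, by omega⟩, by simp [Kprime, KprimeColoring]; omega⟩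

theorem isProperEdgeColoring : IsProperEdgeColoring (Kprime n) (KprimeColoring n) := by
  refine IsProperEdgeColoring.of_injOn fun v => ?_
  rintro (a | a | _) ha (b | b | _) hb hab <;> rcases v with _ | _ | _ <;>
    simp [Kprime, KprimeColoring, Fin.ext_iff] at ha hb hab ⊢ <;> omega

theorem isProperTEdgeColoring (hn : 0 < n) :
    IsProperTEdgeColoring (Kprime n) (2 * n) (KprimeColoring n) := by
  refine isProperTEdgeColoring_of_vSpectrum isProperEdgeColoring ?_ fun k hk => ?_
  · rintro (i | j | u)
    · rw [vSpectrum_inl]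
      exact Icc_subset_Icc (by omega) (by omega)
    · by_cases hj : (j : ℕ) = n - 1
      · rw [vSpectrum_inr_inl_of_eq j hj]
        exact (erase_subset _ _).trans (Icc_subset_Icc hn le_rfl)
      · rw [vSpectrum_inr_inl_of_lt j (by omega)]
        exact Icc_subset_Icc (by omega) (by omega)
    · rw [vSpectrum_inr_inr hn]
      exact Icc_subset_Icc (by omega) le_rfl
  · rw [mem_Icc] at hk
    by_cases hk1 : k ≤ n
    · exact ⟨inl ⟨0, hn⟩, by rw [vSpectrum_inl, mem_Icc, Fin.val_mk]; omega⟩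
    by_cases hk2 : k < 2 * n
    · exact ⟨inl ⟨n - 1, by omega⟩, by rw [vSpectrum_inl, mem_Icc, Fin.val_mk]; omega⟩
    · exact ⟨inr (inr ()), by rw [vSpectrum_inr_inr hn, mem_Icc]; omega⟩

theorem setDef_vSpectrum_inl (i : Fin n) :
    setDef (vSpectrum (Kprime n) (KprimeColoring n) (inl i)) = 0 := by
  rw [vSpectrum_inl, setDef_Icc (by omega)]

theorem setDef_vSpectrum_inr_inl (hn : 2 ≤ n) (j : Fin n) :
    setDef (vSpectrum (Kprime n) (KprimeColoring n) (inr (inl j))) =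
      if (j : ℕ) = n - 1 then 1 else 0 := by
  split_ifs with hj
  · rw [vSpectrum_inr_inl_of_eq j hj, setDef_Icc_erase (by omega) (by omega)]
  · rw [vSpectrum_inr_inl_of_lt j (by omega), setDef_Icc (by omega)]

theorem setDef_vSpectrum_inr_inr (hn : 0 < n) (u : Unit) :
    setDef (vSpectrum (Kprime n) (KprimeColoring n) (inr (inr u))) = 0 := by
  rw [vSpectrum_inr_inr hn, setDef_Icc (by omega)]

theorem colDef_eq_one (hn : 2 ≤ n) : colDef (Kprime n) (KprimeColoring n) = 1 := by
  simp only [colDef, Fintype.sum_sum_type, setDef_vSpectrum_inl, setDef_vSpectrum_inr_inl hn,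
    setDef_vSpectrum_inr_inr (by omega : 0 < n), sum_const_zero, zero_add, add_zero]
  rw [Fin.sum_univ_eq_sum_range (fun k => if k = n - 1 then 1 else 0), sum_ite_eq',
    if_pos (mem_range.2 (by omega))]

end Kprime

theorem stmt_3 (n : ℕ) (hn : 2 ≤ n) :
    IsProperTEdgeColoring (Kprime n) (2 * n) (KprimeColoring n) ∧
    colDef (Kprime n) (KprimeColoring n) = 1 :=
  ⟨Kprime.isProperTEdgeColoring (by omega), Kprime.colDef_eq_one hn⟩
end

section
/- If G is a connected graph, then W_def(G) ≤ 1 + def(G) + max_{P ∈ 𝐏} Σ_{v ∈ V(P)} (d_G(v) − 1), where 𝐏 is the set of all shortest paths in G. -/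
open scoped Classical

/-!
Take a coloring attaining `def(G)` with `t` colors. Colors `1` and `t` occur at vertices `u`
and `v`; join them by a shortest path. Consecutive vertices on the path share the color of the
edge between them, so along the path the color can climb by at most `max S(x) − min S(x)` at
each vertex `x`, and `max S(x) − min S(x) = (|S(x)| − 1) + def(S(x)) ≤ (d(x) − 1) + def(S(x))`.
-/

def Finset.colorSpan (S : Finset ℕ) : ℕ := S.max.getD 0 - S.min.getD 0

lemma Finset.le_add_colorSpan {S : Finset ℕ} {a b : ℕ} (ha : a ∈ S) (hb : b ∈ S) :
    b ≤ a + S.colorSpan := by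
  have hne : S.Nonempty := ⟨a, ha⟩
  have hmax : S.max.getD 0 = S.max' hne := by rw [← Finset.coe_max' hne]; rfl
  have hmin : S.min.getD 0 = S.min' hne := by rw [← Finset.coe_min' hne]; rfl
  have := S.le_max' b hb
  have := S.min'_le a ha
  rw [Finset.colorSpan, hmax, hmin]
  omega

lemma Finset.colorSpan_le_card_sub_one_add_setDef (S : Finset ℕ) :
    S.colorSpan ≤ (S.card - 1) + setDef S :=
  le_add_tsub

section Spectrum

variable {V : Type*} [Fintype V] (G : SimpleGraph V) (c : Sym2 V → ℕ)

lemma mem_vSpectrum_of_adj {x y : V} (h : G.Adj x y) : c s(x, y) ∈ vSpectrum G c x :=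
  Finset.mem_image.2 ⟨y, Finset.mem_filter.2 ⟨Finset.mem_univ _, h⟩, rfl⟩

lemma exists_mem_vSpectrum_of_mem_edgeSet {e : Sym2 V} (he : e ∈ G.edgeSet) :
    ∃ x, c e ∈ vSpectrum G c x := by
  induction e using Sym2.ind with
  | _ a b => exact ⟨a, mem_vSpectrum_of_adj G c he⟩

lemma card_vSpectrum_le_degree (x : V) : (vSpectrum G c x).card ≤ G.degree x := by
  refine Finset.card_image_le.trans_eq ?_
  rw [← SimpleGraph.card_neighborFinset_eq_degree]
  congr 1
  ext y
  simp

lemma SimpleGraph.Walk.le_add_sum_colorSpan {u v : V} (p : G.Walk u v) {a b : ℕ}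
    (ha : a ∈ vSpectrum G c u) (hb : b ∈ vSpectrum G c v) :
    b ≤ a + (p.support.map fun x => (vSpectrum G c x).colorSpan).sum := by
  induction p generalizing a with
  | nil =>
    simpa using Finset.le_add_colorSpan ha hb
  | @cons u w v h q ih =>
    have hu : c s(u, w) ∈ vSpectrum G c u := mem_vSpectrum_of_adj G c h
    have hw : c s(u, w) ∈ vSpectrum G c w := by
      simpa [Sym2.eq_swap] using mem_vSpectrum_of_adj G c h.symm
    have := ih hw hb
    have := Finset.le_add_colorSpan ha hu
    simp only [SimpleGraph.Walk.support_cons, List.map_cons, List.sum_cons]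
    omega

lemma SimpleGraph.Walk.IsPath.le_add_sum_degree_sub_one_add_colDef {u v : V}
    {p : G.Walk u v} (hp : p.IsPath) {a b : ℕ}
    (ha : a ∈ vSpectrum G c u) (hb : b ∈ vSpectrum G c v) :
    b ≤ a + ∑ x ∈ p.support.toFinset, (G.degree x - 1) + colDef G c := by
  have hchain := p.le_add_sum_colorSpan G c ha hb
  rw [← List.sum_toFinset _ hp.support_nodup] at hchain
  have hspan : ∑ x ∈ p.support.toFinset, (vSpectrum G c x).colorSpan ≤
      ∑ x ∈ p.support.toFinset, (G.degree x - 1) + colDef G c := calc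
    _ ≤ ∑ x ∈ p.support.toFinset, (((vSpectrum G c x).card - 1) + setDef (vSpectrum G c x)) :=
      Finset.sum_le_sum fun x _ => (vSpectrum G c x).colorSpan_le_card_sub_one_add_setDef
    _ = ∑ x ∈ p.support.toFinset, ((vSpectrum G c x).card - 1) +
        ∑ x ∈ p.support.toFinset, setDef (vSpectrum G c x) := Finset.sum_add_distrib
    _ ≤ _ := by
      gcongr with x
      · exact card_vSpectrum_le_degree G c x
      · exact Finset.sum_le_sum_of_subset (Finset.subset_univ _)
  omega

end Spectrum

lemma SimpleGraph.bddAbove_walk_sum_degree_sub_one {V : Type*} [Fintype V]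
    (G : SimpleGraph V) (P : ∀ {u v : V}, G.Walk u v → Prop) :
    BddAbove {s : ℕ | ∃ (u v : V) (p : G.Walk u v), P p ∧
      s = ∑ x ∈ p.support.toFinset, (G.degree x - 1)} := by
  refine ⟨∑ x, G.degree x, ?_⟩
  rintro s ⟨u, v, p, -, rfl⟩
  calc ∑ x ∈ p.support.toFinset, (G.degree x - 1)
      ≤ ∑ x ∈ p.support.toFinset, G.degree x := Finset.sum_le_sum fun x _ => Nat.sub_le _ _
    _ ≤ ∑ x, G.degree x := Finset.sum_le_sum_of_subset (Finset.subset_univ _)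

theorem stmt_5 {V : Type*} [Fintype V] (G : SimpleGraph V) (hG : G.Connected) :
    Wdef G ≤ 1 + graphDef G +
      sSup {s : ℕ | ∃ (u v : V) (p : G.Walk u v), p.IsPath ∧ p.length = G.dist u v ∧
        s = ∑ x ∈ p.support.toFinset, (G.degree x - 1)} := by
  refine csSup_le' ?_
  rintro t ⟨c, ⟨-, -, hused⟩, hdef⟩
  obtain rfl | ht := Nat.eq_zero_or_pos t
  · omega
  obtain ⟨e₁, he₁, hc₁⟩ := hused 1 (Finset.mem_Icc.2 ⟨le_rfl, ht⟩)
  obtain ⟨eₜ, heₜ, hcₜ⟩ := hused t (Finset.mem_Icc.2 ⟨ht, le_rfl⟩)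
  obtain ⟨u, hu⟩ := exists_mem_vSpectrum_of_mem_edgeSet G c he₁
  obtain ⟨v, hv⟩ := exists_mem_vSpectrum_of_mem_edgeSet G c heₜ
  rw [hc₁] at hu
  rw [hcₜ] at hv
  obtain ⟨p, hp, hlen⟩ := hG.exists_path_of_dist u v
  have hchain := hp.le_add_sum_degree_sub_one_add_colDef G c hu hv
  have hmax := le_csSup
    (G.bddAbove_walk_sum_degree_sub_one fun {u v} p => p.IsPath ∧ p.length = G.dist u v)
    ⟨u, v, p, ⟨hp, hlen⟩, rfl⟩
  simp only [and_assoc] at hmax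
  omega
end

section
/- If G is a graph with an odd number of vertices, then def(G) ≥ (2|E(G)| − (|V(G)| − 1)·Δ(G)) / 2. -/
/-! Let `Δ` be the maximum degree and fix a proper edge-coloring. Call an edge late if, at one of
its ends, another edge has a smaller color in the same residue class mod `Δ`. At a vertex `v` the
late colors lie in `[min S(v) + Δ, max S(v)]`, so there are at most `def(v)` of them. The remaining
edges of each residue class form a matching, which on an odd number `n` of vertices has at most
`(n - 1) / 2` edges. Hence `|E| ≤ Δ (n - 1) / 2 + def(G)`. -/

open scoped Classical

open Finset SimpleGraph

theorem setDef_eq {S : Finset ℕ} (hS : S.Nonempty) :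
    setDef S = S.max' hS - S.min' hS - (#S - 1) := by
  rw [setDef, ← coe_max' hS, ← coe_min' hS]
  rfl

/-- A color that repeats the residue mod `m ≥ #S` of a smaller one is at least `min S + #S`,
so such colors fit into the `setDef S` slots of `[min S + #S, max S]`. -/
theorem card_filter_exists_lt_modEq_le_setDef {S : Finset ℕ} {m : ℕ} (hm : #S ≤ m) :
    #{x ∈ S | ∃ y ∈ S, y < x ∧ y ≡ x [MOD m]} ≤ setDef S := by
  rcases S.eq_empty_or_nonempty with rfl | hS
  · simp
  have hsub :
      {x ∈ S | ∃ y ∈ S, y < x ∧ y ≡ x [MOD m]} ⊆ Icc (S.min' hS + #S) (S.max' hS) := by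
    intro x hx
    obtain ⟨hxS, y, hyS, hyx, hmod⟩ := mem_filter.mp hx
    have hdvd : m ∣ x - y := (Nat.modEq_iff_dvd' hyx.le).mp hmod
    have hgap : m ≤ x - y := Nat.le_of_dvd (by omega) hdvd
    have hy : S.min' hS ≤ y := min'_le S y hyS
    have hx : x ≤ S.max' hS := le_max' S x hxS
    rw [mem_Icc]
    omega
  have hpos : 0 < #S := card_pos.mpr hS
  calc #{x ∈ S | ∃ y ∈ S, y < x ∧ y ≡ x [MOD m]}
      ≤ #(Icc (S.min' hS + #S) (S.max' hS)) := card_le_card hsub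
    _ = setDef S := by rw [Nat.card_Icc, setDef_eq hS]; omega

theorem Sym2.two_mul_card_le_card_of_pairwiseDisjoint {V : Type*} [Fintype V]
    {M : Finset (Sym2 V)} (hdiag : ∀ e ∈ M, ¬ e.IsDiag)
    (hdisj : (M : Set (Sym2 V)).PairwiseDisjoint Sym2.toFinset) :
    2 * #M ≤ Fintype.card V :=
  calc 2 * #M = ∑ e ∈ M, #e.toFinset := by
        rw [sum_congr rfl fun e he => Sym2.card_toFinset_of_not_isDiag e (hdiag e he),
          sum_const, smul_eq_mul, mul_comm]
    _ = #(M.biUnion Sym2.toFinset) := (card_biUnion hdisj).symm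
    _ ≤ Fintype.card V := card_le_univ _

section Coloring

variable {V : Type*} [Fintype V] {G : SimpleGraph V} {c : Sym2 V → ℕ}

theorem IsProperEdgeColoring.injOn_incidenceFinset (hc : IsProperEdgeColoring G c) (v : V) :
    Set.InjOn c (G.incidenceFinset v) := by
  intro e he e' he' hce
  simp only [coe_incidenceFinset] at he he'
  by_contra hne
  exact hc e he.1 e' he'.1 hne ⟨v, he.2, he'.2⟩ hce

theorem vSpectrum_eq_image_incidenceFinset (G : SimpleGraph V) (c : Sym2 V → ℕ) (v : V) :
    vSpectrum G c v = (G.incidenceFinset v).image c := by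
  ext x
  simp only [vSpectrum, mem_image, mem_filter, mem_univ, true_and, mem_incidenceFinset]
  constructor
  · rintro ⟨u, huv, rfl⟩
    exact ⟨s(v, u), (G.mk'_mem_incidenceSet_left_iff).mpr huv, rfl⟩
  · rintro ⟨e, he, rfl⟩
    refine ⟨Sym2.Mem.other he.2, ?_, by rw [Sym2.other_spec]⟩
    rw [← G.mem_edgeSet, Sym2.other_spec]
    exact he.1

theorem IsProperEdgeColoring.card_vSpectrum (hc : IsProperEdgeColoring G c) (v : V) :
    #(vSpectrum G c v) = G.degree v := by
  rw [vSpectrum_eq_image_incidenceFinset, card_image_of_injOn (hc.injOn_incidenceFinset v),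
    card_incidenceFinset_eq_degree]

noncomputable def lateEdgesAt (G : SimpleGraph V) (c : Sym2 V → ℕ) (m : ℕ) (v : V) :
    Finset (Sym2 V) :=
  {e ∈ G.incidenceFinset v | ∃ e' ∈ G.incidenceFinset v, c e' < c e ∧ c e' ≡ c e [MOD m]}

noncomputable def lateEdges (G : SimpleGraph V) (c : Sym2 V → ℕ) (m : ℕ) : Finset (Sym2 V) :=
  univ.biUnion (lateEdgesAt G c m)

theorem card_lateEdgesAt_le_setDef (hc : IsProperEdgeColoring G c) {m : ℕ} {v : V}
    (hm : G.degree v ≤ m) : #(lateEdgesAt G c m v) ≤ setDef (vSpectrum G c v) := by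
  have hmaps : Set.MapsTo c (lateEdgesAt G c m v)
      ({x ∈ vSpectrum G c v | ∃ y ∈ vSpectrum G c v, y < x ∧ y ≡ x [MOD m]} :
        Finset ℕ) := by
    intro e he
    obtain ⟨he, e', he', hlt, hmod⟩ := mem_filter.mp he
    rw [vSpectrum_eq_image_incidenceFinset]
    exact mem_filter.mpr ⟨mem_image_of_mem c he, c e', mem_image_of_mem c he', hlt, hmod⟩
  calc #(lateEdgesAt G c m v)
      ≤ #{x ∈ vSpectrum G c v | ∃ y ∈ vSpectrum G c v, y < x ∧ y ≡ x [MOD m]} :=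
        card_le_card_of_injOn c hmaps
          ((hc.injOn_incidenceFinset v).mono (coe_subset.mpr (filter_subset _ _)))
    _ ≤ setDef (vSpectrum G c v) :=
        card_filter_exists_lt_modEq_le_setDef (hc.card_vSpectrum v ▸ hm)

theorem card_lateEdges_le_colDef (hc : IsProperEdgeColoring G c) :
    #(lateEdges G c G.maxDegree) ≤ colDef G c :=
  (card_biUnion_le).trans
    (sum_le_sum fun v _ => card_lateEdgesAt_le_setDef hc (G.degree_le_maxDegree v))

theorem lateEdges_subset_edgeFinset (G : SimpleGraph V) (c : Sym2 V → ℕ) (m : ℕ) :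
    lateEdges G c m ⊆ G.edgeFinset :=
  biUnion_subset.mpr fun v _ => (filter_subset _ _).trans (G.incidenceFinset_subset v)

theorem mem_lateEdges_of_lt {m : ℕ} {v : V} {e e' : Sym2 V} (he : e ∈ G.incidenceSet v)
    (he' : e' ∈ G.incidenceSet v) (hlt : c e' < c e) (hmod : c e' ≡ c e [MOD m]) :
    e ∈ lateEdges G c m :=
  mem_biUnion.mpr ⟨v, mem_univ v, mem_filter.mpr
    ⟨(G.mem_incidenceFinset _ _).mpr he, e', (G.mem_incidenceFinset _ _).mpr he', hlt, hmod⟩⟩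

/-- Of two distinct edges at a common vertex whose colors agree mod `m`, the one of larger
color is late. -/
theorem pairwiseDisjoint_sdiff_lateEdges (hc : IsProperEdgeColoring G c) (m r : ℕ) :
    (({e ∈ G.edgeFinset \ lateEdges G c m | c e % m = r} : Finset (Sym2 V)) :
      Set (Sym2 V)).PairwiseDisjoint Sym2.toFinset := by
  intro e he e' he' hne
  simp only [coe_filter, mem_sdiff, mem_edgeFinset, Set.mem_ofPred_eq] at he he'
  rw [Function.onFun, Finset.disjoint_left]
  intro v hv hv'
  rw [Sym2.mem_toFinset] at hv hv'
  have hmod : c e ≡ c e' [MOD m] := he.2.trans he'.2.symm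
  have hev : e ∈ G.incidenceSet v := ⟨he.1.1, hv⟩
  have he'v : e' ∈ G.incidenceSet v := ⟨he'.1.1, hv'⟩
  rcases lt_trichotomy (c e) (c e') with hlt | heq | hgt
  · exact he'.1.2 (mem_lateEdges_of_lt he'v hev hlt hmod)
  · exact hc e he.1.1 e' he'.1.1 hne ⟨v, hv, hv'⟩ heq
  · exact he.1.2 (mem_lateEdges_of_lt hev he'v hgt hmod.symm)

theorem two_mul_card_sdiff_lateEdges_le (hodd : Odd (Fintype.card V))
    (hc : IsProperEdgeColoring G c) {m : ℕ} (hm : 0 < m) :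
    2 * #(G.edgeFinset \ lateEdges G c m) ≤ (Fintype.card V - 1) * m := by
  have hclass : ∀ r, 2 * #{e ∈ G.edgeFinset \ lateEdges G c m | c e % m = r}
      ≤ Fintype.card V - 1 := by
    intro r
    have h := Sym2.two_mul_card_le_card_of_pairwiseDisjoint
      (fun e he => G.not_isDiag_of_mem_edgeFinset (mem_sdiff.mp (mem_filter.mp he).1).1)
      (pairwiseDisjoint_sdiff_lateEdges hc m r)
    obtain ⟨k, hk⟩ := hodd
    omega
  calc 2 * #(G.edgeFinset \ lateEdges G c m)
      = ∑ r ∈ range m, 2 * #{e ∈ G.edgeFinset \ lateEdges G c m | c e % m = r} := by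
        rw [← mul_sum, card_eq_sum_card_fiberwise fun e _ => mem_range.mpr (Nat.mod_lt _ hm)]
    _ ≤ ∑ _r ∈ range m, (Fintype.card V - 1) := sum_le_sum fun r _ => hclass r
    _ = (Fintype.card V - 1) * m := by rw [sum_const, card_range, smul_eq_mul, mul_comm]

theorem two_mul_card_edgeFinset_le (hodd : Odd (Fintype.card V))
    (hc : IsProperEdgeColoring G c) :
    2 * #G.edgeFinset ≤ (Fintype.card V - 1) * G.maxDegree + 2 * colDef G c := by
  rcases Nat.eq_zero_or_pos G.maxDegree with h0 | hpos
  · simp [edgeFinset_eq_empty.mpr (G.maxDegree_eq_zero_iff.mp h0)]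
  have hsplit := card_sdiff_add_card_eq_card (lateEdges_subset_edgeFinset G c G.maxDegree)
  have hgood := two_mul_card_sdiff_lateEdges_le hodd hc hpos
  have hlate := card_lateEdges_le_colDef hc
  omega

theorem exists_colDef_eq_graphDef (G : SimpleGraph V) :
    ∃ c, IsProperEdgeColoring G c ∧ colDef G c = graphDef G := by
  obtain ⟨f, hf⟩ := exists_injective_nat (Sym2 V)
  exact Nat.sInf_mem (s := {d | ∃ c, IsProperEdgeColoring G c ∧ colDef G c = d})
    ⟨_, f, fun e _ e' _ hne _ h => hne (hf h), rfl⟩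

end Coloring

theorem stmt_15 {V : Type*} [Fintype V] (G : SimpleGraph V)
    (hodd : Odd (Fintype.card V)) :
    2 * (G.edgeFinset.card : ℤ) - ((Fintype.card V : ℤ) - 1) * G.maxDegree
      ≤ 2 * (graphDef G : ℤ) := by
  obtain ⟨c, hc, hdef⟩ := exists_colDef_eq_graphDef G
  have h := two_mul_card_edgeFinset_le hodd hc
  rw [hdef] at h
  have hV : 1 ≤ Fintype.card V := hodd.pos
  zify [hV] at h
  linarith
end
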